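/- Let V be a real vector space with complex structure J and subspace W ⊆ V, F an alternating form on W. The condition J_J(τ^F W) = τ^F W, where J_J(u,ξ) = (Ju, -J*ξ), holds if and only if J(W) = W and F(Ju, Jw) = F(u,w) for all u,w ∈ W. -/

import Mathlib

/-! Since `J² = -1`, the map `J_J(u, ξ) = (Ju, -ξ ∘ J)` squares to `-1`, and `τ^F W` is stable
under negation, so `J_J(τ^F W) = τ^F W` already follows from `J_J(τ^F W) ⊆ τ^F W`. That inclusion
is tested on pairs `(u, ξ)` with `ξ` any extension of `F(u, ·)` to `V`: it forces `Ju ∈ W`, and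
evaluating the new covector at `Jw` gives `F(Ju, Jw) = ξ(w) = F(u, w)`. -/

open Module

/-- The `F`-rotated generalized tangent space
`τ^F W = {(u,ξ) : u ∈ W, ξ|_W = F(u,·)}`. -/
def tauF {V : Type*} [AddCommGroup V] [Module ℝ V]
    (W : Submodule ℝ V) (F : LinearMap.BilinForm ℝ W) :
    Set (V × Module.Dual ℝ V) :=
  {p | ∃ hu : p.1 ∈ W, ∀ (w : V) (hw : w ∈ W), p.2 w = F ⟨p.1, hu⟩ ⟨w, hw⟩}

open Set

theorem Set.image_eq_self_iff_mapsTo_of_apply_apply_eq_neg {α : Type*} [InvolutiveNeg α]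
    {T : α → α} (hT : ∀ x, T (T x) = -x) {S : Set α} (hS : ∀ x ∈ S, -x ∈ S) :
    T '' S = S ↔ MapsTo T S S := by
  refine ⟨fun h x hx => h ▸ mem_image_of_mem T hx, fun h => h.image_subset.antisymm ?_⟩
  intro x hx
  exact ⟨T (-x), h (hS x hx), by rw [hT, neg_neg]⟩

section ComplexStructure

variable {V : Type*} [AddCommGroup V] [Module ℝ V]

theorem Submodule.map_eq_self_iff_of_apply_apply_eq_neg {J : Module.End ℝ V}
    (hJ : ∀ v, J (J v) = -v) (W : Submodule ℝ V) :
    W.map J = W ↔ ∀ u ∈ W, J u ∈ W := by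
  refine ⟨fun h u hu => h ▸ mem_map_of_mem hu, fun h => ?_⟩
  refine le_antisymm (map_le_iff_le_comap.2 h) fun w hw => ?_
  exact ⟨-J w, neg_mem (h w hw), by rw [map_neg, hJ, neg_neg]⟩

def genComplexStructure (J : Module.End ℝ V) : V × Dual ℝ V → V × Dual ℝ V :=
  fun q => (J q.1, -(q.2.comp J))

theorem genComplexStructure_apply_apply {J : Module.End ℝ V} (hJ : ∀ v, J (J v) = -v)
    (q : V × Dual ℝ V) : genComplexStructure J (genComplexStructure J q) = -q := by
  ext v
  · exact hJ q.1
  · simp [genComplexStructure, hJ]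

variable {W : Submodule ℝ V} {F : LinearMap.BilinForm ℝ W}

theorem neg_mem_tauF {q : V × Dual ℝ V} (hq : q ∈ tauF W F) : -q ∈ tauF W F := by
  obtain ⟨hu, hξ⟩ := hq
  refine ⟨neg_mem hu, fun w hw => ?_⟩
  change -q.2 w = F (-⟨q.1, hu⟩) ⟨w, hw⟩
  rw [map_neg, LinearMap.neg_apply, hξ w hw]

theorem exists_mem_tauF {u : V} (hu : u ∈ W) : ∃ ξ : Dual ℝ V, (u, ξ) ∈ tauF W F := by
  obtain ⟨ξ, hξ⟩ := LinearMap.exists_extend (F ⟨u, hu⟩)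
  exact ⟨ξ, hu, fun w hw => LinearMap.congr_fun hξ ⟨w, hw⟩⟩

theorem genComplexStructure_mem_tauF {J : Module.End ℝ V} (hJ : ∀ v, J (J v) = -v)
    (hW : ∀ u ∈ W, J u ∈ W)
    (hF : ∀ (u w : V) (hu : u ∈ W) (hw : w ∈ W) (hJu : J u ∈ W) (hJw : J w ∈ W),
      F ⟨J u, hJu⟩ ⟨J w, hJw⟩ = F ⟨u, hu⟩ ⟨w, hw⟩)
    {q : V × Dual ℝ V} (hq : q ∈ tauF W F) : genComplexStructure J q ∈ tauF W F := by
  obtain ⟨hu, hξ⟩ := hq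
  refine ⟨hW _ hu, fun w hw => ?_⟩
  have hJJw : (⟨J (J w), hW _ (hW w hw)⟩ : W) = -⟨w, hw⟩ := Subtype.ext (hJ w)
  have hFJ := hF q.1 (J w) hu (hW w hw) (hW _ hu) (hW _ (hW w hw))
  rw [hJJw, map_neg] at hFJ
  change -q.2 (J w) = F ⟨J q.1, hW _ hu⟩ ⟨w, hw⟩
  rw [hξ _ (hW w hw), ← hFJ, neg_neg]

theorem mapsTo_genComplexStructure_tauF_iff {J : Module.End ℝ V} (hJ : ∀ v, J (J v) = -v) :
    MapsTo (genComplexStructure J) (tauF W F) (tauF W F) ↔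
      (∀ u ∈ W, J u ∈ W) ∧
        ∀ (u w : V) (hu : u ∈ W) (hw : w ∈ W) (hJu : J u ∈ W) (hJw : J w ∈ W),
          F ⟨J u, hJu⟩ ⟨J w, hJw⟩ = F ⟨u, hu⟩ ⟨w, hw⟩ := by
  refine ⟨fun h => ⟨fun u hu => ?_, fun u w hu hw hJu hJw => ?_⟩,
    fun ⟨hW, hF⟩ _ hq => genComplexStructure_mem_tauF hJ hW hF hq⟩
  · obtain ⟨ξ, hξ⟩ := exists_mem_tauF (F := F) hu
    exact (h hξ).1
  · obtain ⟨ξ, hξ⟩ := exists_mem_tauF (F := F) hu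
    obtain ⟨_, hJξ⟩ := h hξ
    have hw' := hJξ (J w) hJw
    change -ξ (J (J w)) = _ at hw'
    rw [hJ, map_neg, neg_neg, hξ.2 w hw] at hw'
    exact hw'.symm

end ComplexStructure

theorem stmt18_general {V : Type*} [AddCommGroup V] [Module ℝ V]
    (J : Module.End ℝ V) (hJ2 : J * J = -1)
    (W : Submodule ℝ V) (F : LinearMap.BilinForm ℝ W) :
    (fun q : V × Module.Dual ℝ V => (J q.1, -(q.2.comp J))) '' tauF W F
        = tauF W F ↔
      (W.map J = W ∧
        ∀ (u w : V) (hu : u ∈ W) (hw : w ∈ W)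
          (hJu : J u ∈ W) (hJw : J w ∈ W),
          F ⟨J u, hJu⟩ ⟨J w, hJw⟩ = F ⟨u, hu⟩ ⟨w, hw⟩) := by
  have hJ (v : V) : J (J v) = -v := by
    simpa using LinearMap.congr_fun hJ2 v
  rw [W.map_eq_self_iff_of_apply_apply_eq_neg hJ]
  exact (image_eq_self_iff_mapsTo_of_apply_apply_eq_neg (genComplexStructure_apply_apply hJ)
    fun _ => neg_mem_tauF).trans (mapsTo_genComplexStructure_tauF_iff hJ)

/-- `J_J(τ^F W) = τ^F W` holds if and only if `J(W) = W` and
`F(Ju,Jw) = F(u,w)` for all `u,w ∈ W` (the B-brane condition). -/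
theorem stmt18 {V : Type*} [AddCommGroup V] [Module ℝ V] [FiniteDimensional ℝ V]
    (J : Module.End ℝ V) (hJ2 : J * J = -1)
    (W : Submodule ℝ V) (F : LinearMap.BilinForm ℝ W) (hFalt : F.IsAlt) :
    (fun q : V × Module.Dual ℝ V => (J q.1, -(q.2.comp J))) '' tauF W F
        = tauF W F ↔
      (W.map J = W ∧
        ∀ (u w : V) (hu : u ∈ W) (hw : w ∈ W)
          (hJu : J u ∈ W) (hJw : J w ∈ W),
          F ⟨J u, hJu⟩ ⟨J w, hJw⟩ = F ⟨u, hu⟩ ⟨w, hw⟩) :=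
  stmt18_general J hJ2 W F
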